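/- For 1 ≤ i ≤ n−1 set σ̃_i = (z_i − z_{i+1}) t_{s_i} + c_0 π_i ∈ H. Then: z_i σ̃_i = σ̃_i z_{i+1}; z_{i+1} σ̃_i = σ̃_i z_i; z_j σ̃_i = σ̃_i z_j for j ∉ {i, i+1}; t_{ζ_i} σ̃_i = σ̃_i t_{ζ_{i+1}}; t_{ζ_{i+1}} σ̃_i = σ̃_i t_{ζ_i}; and t_{ζ_j} σ̃_i = σ̃_i t_{ζ_j} for j ∉ {i, i+1}. -/

import Mathlib

/-- `ζ = e^{2πi/r}`. -/
noncomputable def zeta (r : ℕ) : ℂ := Complex.exp (2 * Real.pi * Complex.I / r)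

theorem zeta_pow_self {r : ℕ} (hr : 0 < r) : zeta r ^ r = 1 := by
  rw [zeta, ← Complex.exp_nat_mul, mul_comm, div_mul_cancel₀, Complex.exp_two_pi_mul_I]
  exact_mod_cast Nat.cast_ne_zero.mpr hr.ne'

theorem zeta_zpow_root (r : ℕ) (l : ℤ) : (zeta r ^ l) ^ r = 1 := by
  rcases Nat.eq_zero_or_pos r with h | h
  · rw [h, pow_zero]
  · rw [← zpow_natCast, ← zpow_mul, mul_comm, zpow_mul, zpow_natCast,
      zeta_pow_self h, one_zpow]

/-- The elements of `G(r,1,n)`: `n × n` monomial matrices whose nonzero entries are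
`r`-th roots of unity. -/
def IsGMonomial (r n : ℕ) (w : Matrix (Fin n) (Fin n) ℂ) : Prop :=
  ∃ (σ : Equiv.Perm (Fin n)) (a : Fin n → ℂ), (∀ i, a i ^ r = 1) ∧
    ∀ i j, w i j = if i = σ j then a j else 0

theorem IsGMonomial.mul {r n : ℕ} {w v : Matrix (Fin n) (Fin n) ℂ}
    (hw : IsGMonomial r n w) (hv : IsGMonomial r n v) : IsGMonomial r n (w * v) := by
  obtain ⟨σ, a, ha, hwe⟩ := hw
  obtain ⟨τ, b, hb, hve⟩ := hv
  refine ⟨σ * τ, fun j => a (τ j) * b j, fun j => by rw [mul_pow, ha, hb, one_mul], ?_⟩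
  intro i j
  rw [Matrix.mul_apply, Finset.sum_eq_single (τ j)]
  · rw [hwe, hve, if_pos rfl, Equiv.Perm.mul_apply]
    simp [ite_mul]
  · intro k _ hk
    rw [hve, if_neg hk, mul_zero]
  · simp

/-- The diagonal matrix `ζ_i^l`, with `ζ^l` in position `i` and `1`'s elsewhere. -/
noncomputable def zmat (r n : ℕ) (i : Fin n) (l : ℤ) : Matrix (Fin n) (Fin n) ℂ :=
  Matrix.diagonal (fun a => if a = i then zeta r ^ l else 1)

theorem isGMonomial_zmat (r : ℕ) {n : ℕ} (i : Fin n) (l : ℤ) :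
    IsGMonomial r n (zmat r n i l) := by
  refine ⟨1, fun b => if b = i then zeta r ^ l else 1, ?_, ?_⟩
  · intro b
    dsimp only
    split
    · exact zeta_zpow_root r l
    · exact one_pow r
  · intro a b
    rcases eq_or_ne a b with h | h
    · subst h; simp [zmat, Matrix.diagonal_apply]
    · simp [zmat, Matrix.diagonal_apply_ne _ h, Equiv.Perm.one_apply, h]

/-- The transposition (permutation) matrix `s_{ij}` interchanging coordinates `i` and `j`. -/
def smat {n : ℕ} (i j : Fin n) : Matrix (Fin n) (Fin n) ℂ :=
  Matrix.of fun a b => if a = Equiv.swap i j b then 1 else 0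

theorem isGMonomial_smat (r : ℕ) {n : ℕ} (i j : Fin n) : IsGMonomial r n (smat i j) :=
  ⟨Equiv.swap i j, fun _ => 1, fun _ => one_pow r, fun a b => by simp [smat]⟩

/-- The group `G(r,1,n)` of monomial matrices, as a subtype of matrices. -/
def GMon (r n : ℕ) : Type := {w : Matrix (Fin n) (Fin n) ℂ // IsGMonomial r n w}

/-- `ζ_i^l` as an element of `G(r,1,n)`. -/
noncomputable def zetaW (r : ℕ) {n : ℕ} (i : Fin n) (l : ℤ) : GMon r n :=
  ⟨zmat r n i l, isGMonomial_zmat r i l⟩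

/-- `s_{ij}` as an element of `G(r,1,n)`. -/
noncomputable def sW (r : ℕ) {n : ℕ} (i j : Fin n) : GMon r n :=
  ⟨smat i j, isGMonomial_smat r i j⟩

/-- The reflection `ζ_i^l s_{ij} ζ_i^{-l}` as an element of `G(r,1,n)`. -/
noncomputable def reflW (r : ℕ) {n : ℕ} (i j : Fin n) (l : ℤ) : GMon r n :=
  ⟨zmat r n i l * smat i j * zmat r n i (-l),
    ((isGMonomial_zmat r i l).mul (isGMonomial_smat r i j)).mul (isGMonomial_zmat r i (-l))⟩

/-- The element `ζ_i^l ζ_j^{-l}` of `G(r,1,n)`. -/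
noncomputable def pairW (r : ℕ) {n : ℕ} (i j : Fin n) (l : ℤ) : GMon r n :=
  ⟨zmat r n i l * zmat r n j (-l),
    (isGMonomial_zmat r i l).mul (isGMonomial_zmat r j (-l))⟩

/-- Generators of the rational Cherednik algebra of `G(r,1,n)`:
`x_1, …, x_n`, `y_1, …, y_n` and `t_w` for `w ∈ G(r,1,n)`. -/
inductive CGen (r n : ℕ) where
  | X (i : Fin n) : CGen r n
  | Y (i : Fin n) : CGen r n
  | T (w : GMon r n) : CGen r n

/-- The defining relations of the rational Cherednik algebra of `G(r,1,n)` with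
parameters `κ, c₀, c_1, …, c_{r-1}`. -/
inductive CRel (r n : ℕ) (κ c₀ : ℂ) (c : ℕ → ℂ) :
    FreeAlgebra ℂ (CGen r n) → FreeAlgebra ℂ (CGen r n) → Prop
  | t_mul (u w v : GMon r n) : u.1 = w.1 * v.1 → CRel r n κ c₀ c
      (FreeAlgebra.ι ℂ (.T u)) (FreeAlgebra.ι ℂ (.T w) * FreeAlgebra.ι ℂ (.T v))
  | t_one (u : GMon r n) : u.1 = 1 → CRel r n κ c₀ c (FreeAlgebra.ι ℂ (.T u)) 1
  | t_x (w : GMon r n) (i : Fin n) : CRel r n κ c₀ c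
      (FreeAlgebra.ι ℂ (.T w) * FreeAlgebra.ι ℂ (.X i))
      (∑ j, (w.1⁻¹ i j) • (FreeAlgebra.ι ℂ (.X j) * FreeAlgebra.ι ℂ (.T w)))
  | t_y (w : GMon r n) (i : Fin n) : CRel r n κ c₀ c
      (FreeAlgebra.ι ℂ (.T w) * FreeAlgebra.ι ℂ (.Y i))
      (∑ j, (w.1 j i) • (FreeAlgebra.ι ℂ (.Y j) * FreeAlgebra.ι ℂ (.T w)))
  | xx (i j : Fin n) : CRel r n κ c₀ c
      (FreeAlgebra.ι ℂ (.X i) * FreeAlgebra.ι ℂ (.X j))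
      (FreeAlgebra.ι ℂ (.X j) * FreeAlgebra.ι ℂ (.X i))
  | yy (i j : Fin n) : CRel r n κ c₀ c
      (FreeAlgebra.ι ℂ (.Y i) * FreeAlgebra.ι ℂ (.Y j))
      (FreeAlgebra.ι ℂ (.Y j) * FreeAlgebra.ι ℂ (.Y i))
  | yx_ne (i j : Fin n) : i ≠ j → CRel r n κ c₀ c
      (FreeAlgebra.ι ℂ (.Y i) * FreeAlgebra.ι ℂ (.X j))
      (FreeAlgebra.ι ℂ (.X j) * FreeAlgebra.ι ℂ (.Y i) +
        c₀ • ∑ l ∈ Finset.range r,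
          (zeta r ^ (-(l : ℤ))) • FreeAlgebra.ι ℂ (.T (reflW r i j (l : ℤ))))
  | yx_eq (i : Fin n) : CRel r n κ c₀ c
      (FreeAlgebra.ι ℂ (.Y i) * FreeAlgebra.ι ℂ (.X i))
      (FreeAlgebra.ι ℂ (.X i) * FreeAlgebra.ι ℂ (.Y i) + κ • (1 : FreeAlgebra ℂ (CGen r n))
        - ∑ l ∈ Finset.Ico 1 r,
            (c l * (1 - zeta r ^ (-(l : ℤ)))) • FreeAlgebra.ι ℂ (.T (zetaW r i (l : ℤ)))
        - c₀ • ∑ j ∈ Finset.univ.erase i, ∑ l ∈ Finset.range r,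
            FreeAlgebra.ι ℂ (.T (reflW r i j (l : ℤ))))

variable (r n : ℕ) (κ c₀ : ℂ) (c : ℕ → ℂ)

/-- The image of `x_i` in the rational Cherednik algebra of `G(r,1,n)`. -/
noncomputable def cX (i : Fin n) : RingQuot (CRel r n κ c₀ c) :=
  RingQuot.mkAlgHom ℂ (CRel r n κ c₀ c) (FreeAlgebra.ι ℂ (.X i))

/-- The image of `y_i` in the rational Cherednik algebra of `G(r,1,n)`. -/
noncomputable def cY (i : Fin n) : RingQuot (CRel r n κ c₀ c) :=
  RingQuot.mkAlgHom ℂ (CRel r n κ c₀ c) (FreeAlgebra.ι ℂ (.Y i))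

/-- The image of `t_w` in the rational Cherednik algebra of `G(r,1,n)`. -/
noncomputable def cT (w : GMon r n) : RingQuot (CRel r n κ c₀ c) :=
  RingQuot.mkAlgHom ℂ (CRel r n κ c₀ c) (FreeAlgebra.ι ℂ (.T w))

/-- `φ_i = Σ_{j<i} Σ_{l=0}^{r-1} t_{ζ_i^l s_{ij} ζ_i^{-l}}`. -/
noncomputable def cPhi (i : Fin n) : RingQuot (CRel r n κ c₀ c) :=
  ∑ j ∈ Finset.univ.filter (fun j : Fin n => j < i), ∑ l ∈ Finset.range r,
    cT r n κ c₀ c (reflW r i j (l : ℤ))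

/-- The Dunkl–Opdam–Cherednik element `z_i = y_i x_i + c₀ φ_i`. -/
noncomputable def cz (i : Fin n) : RingQuot (CRel r n κ c₀ c) :=
  cY r n κ c₀ c i * cX r n κ c₀ c i + c₀ • cPhi r n κ c₀ c i

/-- `π_i = Σ_{l=0}^{r-1} t_{ζ_i^l ζ_{i+1}^{-l}}` (here with the two indices `i`, `i+1`
passed separately). -/
noncomputable def cPi (i j : Fin n) : RingQuot (CRel r n κ c₀ c) :=
  ∑ l ∈ Finset.range r, cT r n κ c₀ c (pairW r i j (l : ℤ))

/-- The idempotent `ε_{ij} = (1/r) Σ_{l=0}^{r-1} ζ^{-lj} t_{ζ_i^l}`. -/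
noncomputable def cEps (i : Fin n) (j : ℤ) : RingQuot (CRel r n κ c₀ c) :=
  (r : ℂ)⁻¹ • ∑ l ∈ Finset.range r, (zeta r ^ (-(l : ℤ) * j)) • cT r n κ c₀ c (zetaW r i (l : ℤ))

/-- The reparametrised constants `d_j = Σ_{l=1}^{r-1} ζ^{lj} c_l`. -/
noncomputable def dpar (j : ℤ) : ℂ := ∑ l ∈ Finset.Ico 1 r, zeta r ^ ((l : ℤ) * j) * c l

/-- The denominator-cleared intertwiner `σ̃_i = (z_i - z_{i+1}) t_{s_i} + c₀ π_i`. -/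
noncomputable def cSigma (i j : Fin n) : RingQuot (CRel r n κ c₀ c) :=
  (cz r n κ c₀ c i - cz r n κ c₀ c j) * cT r n κ c₀ c (sW r i j) + c₀ • cPi r n κ c₀ c i j


/-! ### Auxiliary infrastructure: roots of unity and sum reindexing -/

lemma zeta_ne_zero (r : ℕ) : zeta r ≠ 0 := Complex.exp_ne_zero _

lemma zeta_zpow_add (r : ℕ) (a b : ℤ) : zeta r ^ (a + b) = zeta r ^ a * zeta r ^ b :=
  zpow_add₀ (zeta_ne_zero r) a b

lemma zeta_zpow_per {r : ℕ} (hr : 0 < r) (m : ℤ) : zeta r ^ (m + r) = zeta r ^ m := by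
  rw [zeta_zpow_add, zpow_natCast, zeta_pow_self hr, mul_one]

section SumShift

variable {M : Type*} [AddCommGroup M]

lemma sum_range_shift_one (r : ℕ) (F : ℤ → M) (hF : ∀ z : ℤ, F (z + r) = F z) :
    ∑ l ∈ Finset.range r, F ((l : ℤ) + 1) = ∑ l ∈ Finset.range r, F (l : ℤ) := by
  have key : (∑ l ∈ Finset.range r, F ((l : ℤ) + 1)) + F 0
      = (∑ l ∈ Finset.range r, F (l : ℤ)) + F 0 := by
    calc (∑ l ∈ Finset.range r, F ((l : ℤ) + 1)) + F 0
        = (∑ l ∈ Finset.range r, F (((l + 1 : ℕ) : ℤ))) + F ((0 : ℕ) : ℤ) := by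
          rw [Nat.cast_zero]
          exact congrArg (· + F 0) (Finset.sum_congr rfl fun l _ => by norm_cast)
      _ = ∑ l ∈ Finset.range (r + 1), F (l : ℤ) := (Finset.sum_range_succ' (fun l : ℕ => F (l : ℤ)) r).symm
      _ = (∑ l ∈ Finset.range r, F (l : ℤ)) + F (r : ℤ) := Finset.sum_range_succ _ r
      _ = (∑ l ∈ Finset.range r, F (l : ℤ)) + F 0 := by
          rw [show F ((r : ℕ) : ℤ) = F 0 by simpa using hF 0]
  exact add_right_cancel key

lemma sum_range_shift (r : ℕ) (F : ℤ → M) (hF : ∀ z : ℤ, F (z + r) = F z) (m : ℤ) :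
    ∑ l ∈ Finset.range r, F ((l : ℤ) + m) = ∑ l ∈ Finset.range r, F (l : ℤ) := by
  induction m using Int.induction_on with
  | zero => simp
  | succ k ih =>
    have h1 := sum_range_shift_one r (fun z => F (z + k)) (fun z => by
      simpa [add_right_comm] using hF (z + k))
    calc ∑ l ∈ Finset.range r, F ((l : ℤ) + (k + 1))
        = ∑ l ∈ Finset.range r, F (((l : ℤ) + 1) + k) := by
          exact Finset.sum_congr rfl fun l _ => by ring_nf
      _ = ∑ l ∈ Finset.range r, F ((l : ℤ) + k) := h1
      _ = _ := ih
  | pred k ih =>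
    have h1 := sum_range_shift_one r (fun z => F (z + (-(k : ℤ) - 1))) (fun z => by
      simpa [add_right_comm] using hF (z + (-(k : ℤ) - 1)))
    calc ∑ l ∈ Finset.range r, F ((l : ℤ) + (-(k : ℤ) - 1))
        = ∑ l ∈ Finset.range r, F (((l : ℤ) + 1) + (-(k : ℤ) - 1)) := h1.symm
      _ = ∑ l ∈ Finset.range r, F ((l : ℤ) + (-k)) := by
          exact Finset.sum_congr rfl fun l _ => by ring_nf
      _ = _ := ih

lemma sum_range_neg (r : ℕ) (F : ℤ → M) (hF : ∀ z : ℤ, F (z + r) = F z) :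
    ∑ l ∈ Finset.range r, F (-(l : ℤ)) = ∑ l ∈ Finset.range r, F (l : ℤ) := by
  have hrefl := Finset.sum_range_reflect (fun l : ℕ => F (-(l : ℤ))) r
  -- hrefl : ∑ j ∈ range r, F (-( (r - 1 - j : ℕ) : ℤ)) = ∑ j ∈ range r, F (-(j : ℤ))
  rw [← hrefl]
  have h2 : ∀ j ∈ Finset.range r, F (-(((r - 1 - j : ℕ)) : ℤ)) = F ((j : ℤ) + 1) := by
    intro j hj
    have hjr : j < r := Finset.mem_range.mp hj
    have hc : (((r - 1 - j : ℕ)) : ℤ) = (r : ℤ) - 1 - j := by omega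
    have : -(((r - 1 - j : ℕ)) : ℤ) = ((j : ℤ) + 1) + (-(r : ℤ)) := by rw [hc]; ring
    rw [this]
    have := hF (((j : ℤ) + 1) + (-(r : ℤ)))
    simpa using this.symm
  rw [Finset.sum_congr rfl h2, sum_range_shift_one r F hF]

end SumShift


/-! ### Matrix-level lemmas -/

/-- Monomial matrix normal form. -/
def mon {n : ℕ} (σ : Equiv.Perm (Fin n)) (a : Fin n → ℂ) : Matrix (Fin n) (Fin n) ℂ :=
  Matrix.of fun p q => if p = σ q then a q else 0

lemma mon_mul {n : ℕ} (σ τ : Equiv.Perm (Fin n)) (a b : Fin n → ℂ) :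
    mon σ a * mon τ b = mon (σ * τ) (fun q => a (τ q) * b q) := by
  ext p q
  rw [Matrix.mul_apply, Finset.sum_eq_single (τ q)]
  · simp [mon, Equiv.Perm.mul_apply, ite_mul]
    exact if_congr Iff.rfl rfl rfl
  · intro k _ hk
    have : ¬(k = τ q) := hk
    simp [mon, this]
  · simp

lemma mon_one {n : ℕ} : mon (1 : Equiv.Perm (Fin n)) (fun _ => (1 : ℂ)) = 1 := by
  ext p q
  by_cases h : p = q <;> simp [mon, Matrix.one_apply, h, Equiv.Perm.one_apply]

lemma zmat_eq_mon (r n : ℕ) (k : Fin n) (m : ℤ) :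
    zmat r n k m = mon 1 (fun q => if q = k then zeta r ^ m else 1) := by
  ext p q
  rcases eq_or_ne p q with rfl | h
  · simp [zmat, mon, Matrix.diagonal_apply_eq, Equiv.Perm.one_apply]
  · simp [zmat, mon, Matrix.diagonal_apply_ne _ h, Equiv.Perm.one_apply, h]

lemma smat_eq_mon {n : ℕ} (i j : Fin n) :
    smat i j = mon (Equiv.swap i j) (fun _ => (1 : ℂ)) := rfl

lemma zmat_mul_same (r n : ℕ) (k : Fin n) (a b : ℤ) :
    zmat r n k a * zmat r n k b = zmat r n k (a + b) := by
  rw [zmat, zmat, zmat, Matrix.diagonal_mul_diagonal]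
  refine congrArg Matrix.diagonal (funext fun q => ?_)
  by_cases hq : q = k <;> simp [hq, zeta_zpow_add]

lemma zmat_comm (r n : ℕ) (k k' : Fin n) (a b : ℤ) :
    zmat r n k a * zmat r n k' b = zmat r n k' b * zmat r n k a := by
  rw [zmat, zmat, Matrix.diagonal_mul_diagonal, Matrix.diagonal_mul_diagonal]
  refine congrArg Matrix.diagonal (funext fun q => ?_)
  ring

lemma zmat_zero (r n : ℕ) (k : Fin n) : zmat r n k 0 = 1 := by
  rw [zmat]
  have : (fun a : Fin n => if a = k then zeta r ^ (0 : ℤ) else 1) = fun _ => (1 : ℂ) := by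
    funext q; split <;> simp
  rw [this, Matrix.diagonal_one]

lemma zmat_per {r : ℕ} (hr : 0 < r) {n : ℕ} (k : Fin n) (m : ℤ) :
    zmat r n k (m + r) = zmat r n k m := by
  rw [zmat, zmat]
  refine congrArg Matrix.diagonal (funext fun q => ?_)
  by_cases hq : q = k <;> simp [hq, zeta_zpow_per hr]

lemma zmat_per' {r : ℕ} (hr : 0 < r) {n : ℕ} (k : Fin n) (m : ℤ) :
    zmat r n k (m - r) = zmat r n k m := by
  have := (zmat_per hr k (m - r)).symm
  simpa using this

lemma smat_mul_zmat (r n : ℕ) (u v k : Fin n) (m : ℤ) :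
    smat u v * zmat r n k m = zmat r n (Equiv.swap u v k) m * smat u v := by
  rw [zmat_eq_mon, zmat_eq_mon, smat_eq_mon, mon_mul, mon_mul]
  congr 1
  funext q
  rcases eq_or_ne q k with rfl | hq
  · simp
  · simp [hq, (Equiv.swap u v).injective.ne hq]

lemma smat_mul_self {n : ℕ} (u v : Fin n) : smat u v * smat u v = 1 := by
  rw [smat_eq_mon, mon_mul, Equiv.swap_mul_self]
  have : (fun q : Fin n => (1 : ℂ) * 1) = fun _ => (1 : ℂ) := by funext q; simp
  rw [this, mon_one]

lemma smat_symm {n : ℕ} (u v : Fin n) : smat u v = smat v u := by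
  rw [smat_eq_mon, smat_eq_mon, Equiv.swap_comm]

lemma smat_conj {n : ℕ} (u v a b : Fin n) :
    smat u v * smat a b = smat (Equiv.swap u v a) (Equiv.swap u v b) * smat u v := by
  simp only [smat_eq_mon]
  rw [mon_mul, mon_mul]
  congr 1
  rw [Equiv.swap_apply_apply, Equiv.swap_inv]
  simp [mul_assoc, Equiv.swap_mul_self]


/-! ### Basic moves in the quotient algebra -/

local notation "𝕋" => cT r n κ c₀ c
local notation "𝕏" => cX r n κ c₀ c
local notation "𝕐" => cY r n κ c₀ c

lemma rel_eq {a b : FreeAlgebra ℂ (CGen r n)} (h : CRel r n κ c₀ c a b) :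
    RingQuot.mkAlgHom ℂ (CRel r n κ c₀ c) a = RingQuot.mkAlgHom ℂ (CRel r n κ c₀ c) b :=
  RingQuot.mkAlgHom_rel ℂ h

lemma cT_mul' (w v : GMon r n) : 𝕋 ⟨w.1 * v.1, w.2.mul v.2⟩ = 𝕋 w * 𝕋 v := by
  have h := rel_eq r n κ c₀ c (CRel.t_mul ⟨w.1 * v.1, w.2.mul v.2⟩ w v rfl)
  rw [map_mul] at h
  exact h

lemma cT_congr {u v : GMon r n} (h : u.1 = v.1) : 𝕋 u = 𝕋 v := by
  cases u; cases v; cases h; rfl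

lemma cT_mul_single {w1 w2 w3 : GMon r n} (h : w1.1 * w2.1 = w3.1) : 𝕋 w1 * 𝕋 w2 = 𝕋 w3 := by
  rw [← cT_mul' r n κ c₀ c w1 w2]
  exact cT_congr r n κ c₀ c h

lemma cT_mul_eq {w1 w2 w3 w4 : GMon r n} (h : w1.1 * w2.1 = w3.1 * w4.1) :
    𝕋 w1 * 𝕋 w2 = 𝕋 w3 * 𝕋 w4 := by
  rw [← cT_mul' r n κ c₀ c w1 w2, ← cT_mul' r n κ c₀ c w3 w4]
  exact cT_congr r n κ c₀ c h

lemma cT_one {u : GMon r n} (h : u.1 = 1) : 𝕋 u = 1 := by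
  have h2 := rel_eq r n κ c₀ c (CRel.t_one u h)
  rw [map_one] at h2
  exact h2

lemma cT_mul_X (hr : 0 < r) (w : GMon r n) (σ : Equiv.Perm (Fin n)) (a : Fin n → ℂ)
    (ha : ∀ q, a q ^ r = 1)
    (hw : ∀ p q, w.1 p q = if p = σ q then a q else 0) (i : Fin n) :
    𝕋 w * 𝕏 i = (a i)⁻¹ • (𝕏 (σ i) * 𝕋 w) := by
  have ha0 : ∀ q, a q ≠ 0 := by
    intro q h0
    have h1 := ha q
    rw [h0, zero_pow hr.ne'] at h1
    exact zero_ne_one h1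
  have hinv : w.1⁻¹ = Matrix.of fun p q => if q = σ p then (a p)⁻¹ else 0 := by
    apply Matrix.inv_eq_right_inv
    ext p k
    rw [Matrix.mul_apply, Finset.sum_eq_single (σ.symm p)]
    · rw [hw, Matrix.of_apply, Equiv.apply_symm_apply, if_pos rfl, Matrix.one_apply]
      by_cases hpk : p = k
      · simp [hpk, mul_inv_cancel₀ (ha0 _)]
      · rw [if_neg (fun hc : k = p => hpk hc.symm), mul_zero, if_neg hpk]
    · intro b _ hb
      rw [hw]
      have hb2 : ¬ p = σ b := fun hc => hb (by rw [hc]; simp)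
      simp [hb2]
    · simp
  have h := rel_eq r n κ c₀ c (CRel.t_x w i)
  rw [map_mul, map_sum] at h
  simp only [map_smul, map_mul] at h
  rw [hinv] at h
  calc 𝕋 w * 𝕏 i
      = ∑ j, (Matrix.of fun p q => if q = σ p then (a p)⁻¹ else 0) i j • (𝕏 j * 𝕋 w) := h
    _ = ∑ j, (if j = σ i then (a i)⁻¹ else 0) • (𝕏 j * 𝕋 w) := rfl
    _ = _ := by
        simp only [ite_smul, zero_smul]
        rw [Finset.sum_ite_eq' Finset.univ (σ i)]
        simp

lemma cT_mul_Y (w : GMon r n) (σ : Equiv.Perm (Fin n)) (a : Fin n → ℂ)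
    (hw : ∀ p q, w.1 p q = if p = σ q then a q else 0) (i : Fin n) :
    𝕋 w * 𝕐 i = a i • (𝕐 (σ i) * 𝕋 w) := by
  have h := rel_eq r n κ c₀ c (CRel.t_y w i)
  rw [map_mul, map_sum] at h
  simp only [map_smul, map_mul] at h
  calc 𝕋 w * 𝕐 i
      = ∑ j, w.1 j i • (𝕐 j * 𝕋 w) := h
    _ = ∑ j, (if j = σ i then a i else 0) • (𝕐 j * 𝕋 w) := by
        refine Finset.sum_congr rfl fun j _ => ?_
        rw [hw]
    _ = _ := by
        simp only [ite_smul, zero_smul]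
        rw [Finset.sum_ite_eq' Finset.univ (σ i)]
        simp

lemma zetaW_entry (k : Fin n) (m : ℤ) (p q : Fin n) :
    (zetaW r k m).1 p q
      = if p = (1 : Equiv.Perm (Fin n)) q then (if q = k then zeta r ^ m else 1) else 0 :=
  congrFun (congrFun (zmat_eq_mon r n k m) p) q

lemma sW_entry (u v p q : Fin n) :
    (sW r u v).1 p q = if p = Equiv.swap u v q then (1 : ℂ) else 0 := rfl

lemma TzX (hr : 0 < r) (k : Fin n) (m : ℤ) (q : Fin n) :
    𝕋 (zetaW r k m) * 𝕏 q
      = (if q = k then zeta r ^ (-m) else 1) • (𝕏 q * 𝕋 (zetaW r k m)) := by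
  have h := cT_mul_X r n κ c₀ c hr (zetaW r k m) 1 (fun b => if b = k then zeta r ^ m else 1)
    (fun b => by split
                 · exact zeta_zpow_root r m
                 · exact one_pow r)
    (zetaW_entry r n k m) q
  rw [h]
  congr 1
  rw [apply_ite Inv.inv, inv_one, ← zpow_neg]

lemma TzY (k : Fin n) (m : ℤ) (q : Fin n) :
    𝕋 (zetaW r k m) * 𝕐 q
      = (if q = k then zeta r ^ m else 1) • (𝕐 q * 𝕋 (zetaW r k m)) :=
  cT_mul_Y r n κ c₀ c (zetaW r k m) 1 (fun b => if b = k then zeta r ^ m else 1)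
    (zetaW_entry r n k m) q

lemma TsX (hr : 0 < r) (u v q : Fin n) :
    𝕋 (sW r u v) * 𝕏 q = 𝕏 (Equiv.swap u v q) * 𝕋 (sW r u v) := by
  have h := cT_mul_X r n κ c₀ c hr (sW r u v) (Equiv.swap u v) (fun _ => 1)
    (fun _ => one_pow r) (sW_entry r n u v) q
  simpa using h

lemma TsY (u v q : Fin n) :
    𝕋 (sW r u v) * 𝕐 q = 𝕐 (Equiv.swap u v q) * 𝕋 (sW r u v) := by
  have h := cT_mul_Y r n κ c₀ c (sW r u v) (Equiv.swap u v) (fun _ => 1)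
    (sW_entry r n u v) q
  simpa using h

lemma XX (i j : Fin n) : 𝕏 i * 𝕏 j = 𝕏 j * 𝕏 i := by
  have h := rel_eq r n κ c₀ c (CRel.xx i j)
  rw [map_mul, map_mul] at h
  exact h

lemma YY (i j : Fin n) : 𝕐 i * 𝕐 j = 𝕐 j * 𝕐 i := by
  have h := rel_eq r n κ c₀ c (CRel.yy i j)
  rw [map_mul, map_mul] at h
  exact h

lemma YXne {i j : Fin n} (hij : i ≠ j) :
    𝕐 i * 𝕏 j = 𝕏 j * 𝕐 i
      + c₀ • ∑ l ∈ Finset.range r, (zeta r ^ (-(l : ℤ))) • 𝕋 (reflW r i j (l : ℤ)) := by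
  have h := rel_eq r n κ c₀ c (CRel.yx_ne i j hij)
  simp only [map_mul, map_add, map_smul, map_sum] at h
  exact h


/-! ### Group-element identities in the quotient algebra -/

section Assoc

variable {A : Type*} [Semigroup A]

lemma mul_pull {a b cc d : A} (h : a * b = cc * d) (x : A) : a * (b * x) = cc * (d * x) := by
  rw [← mul_assoc, h, mul_assoc]

lemma mul_pull1 {a b e : A} (h : a * b = e) (x : A) : a * (b * x) = e * x := by
  rw [← mul_assoc, h]

end Assoc

lemma mul_pullₛ {a b cc d : RingQuot (CRel r n κ c₀ c)} {s : ℂ} (h : a * b = s • (cc * d))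
    (x : RingQuot (CRel r n κ c₀ c)) : a * (b * x) = s • (cc * (d * x)) := by
  rw [← mul_assoc, h, smul_mul_assoc, mul_assoc]

lemma TzTz (k : Fin n) (a b : ℤ) :
    𝕋 (zetaW r k a) * 𝕋 (zetaW r k b) = 𝕋 (zetaW r k (a + b)) :=
  cT_mul_single r n κ c₀ c (zmat_mul_same r n k a b)

lemma TzComm (k k' : Fin n) (a b : ℤ) :
    𝕋 (zetaW r k a) * 𝕋 (zetaW r k' b) = 𝕋 (zetaW r k' b) * 𝕋 (zetaW r k a) :=
  cT_mul_eq r n κ c₀ c (zmat_comm r n k k' a b)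

lemma TzZero (k : Fin n) : 𝕋 (zetaW r k 0) = 1 :=
  cT_one r n κ c₀ c (zmat_zero r n k)

lemma TzPer (hr : 0 < r) (k : Fin n) (m : ℤ) :
    𝕋 (zetaW r k (m + r)) = 𝕋 (zetaW r k m) :=
  cT_congr r n κ c₀ c (zmat_per hr k m)

lemma TsTz (u v k : Fin n) (m : ℤ) :
    𝕋 (sW r u v) * 𝕋 (zetaW r k m) = 𝕋 (zetaW r (Equiv.swap u v k) m) * 𝕋 (sW r u v) :=
  cT_mul_eq r n κ c₀ c (smat_mul_zmat r n u v k m)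

lemma TsTzR (u v : Fin n) (m : ℤ) :
    𝕋 (sW r u v) * 𝕋 (zetaW r v m) = 𝕋 (zetaW r u m) * 𝕋 (sW r u v) := by
  have h := TsTz r n κ c₀ c u v v m
  rwa [Equiv.swap_apply_right] at h

lemma TsTzL (u v : Fin n) (m : ℤ) :
    𝕋 (sW r u v) * 𝕋 (zetaW r u m) = 𝕋 (zetaW r v m) * 𝕋 (sW r u v) := by
  have h := TsTz r n κ c₀ c u v u m
  rwa [Equiv.swap_apply_left] at h

lemma TsTzO (u v k : Fin n) (m : ℤ) (h1 : k ≠ u) (h2 : k ≠ v) :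
    𝕋 (sW r u v) * 𝕋 (zetaW r k m) = 𝕋 (zetaW r k m) * 𝕋 (sW r u v) := by
  have h := TsTz r n κ c₀ c u v k m
  rwa [Equiv.swap_apply_of_ne_of_ne h1 h2] at h

lemma TsTs (u v : Fin n) : 𝕋 (sW r u v) * 𝕋 (sW r u v) = 1 := by
  rw [← cT_mul' r n κ c₀ c (sW r u v) (sW r u v)]
  exact cT_one r n κ c₀ c (smat_mul_self u v)

lemma TsSymm (u v : Fin n) : 𝕋 (sW r u v) = 𝕋 (sW r v u) :=
  cT_congr r n κ c₀ c (smat_symm u v)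

lemma TsConj (u v a b : Fin n) :
    𝕋 (sW r u v) * 𝕋 (sW r a b)
      = 𝕋 (sW r (Equiv.swap u v a) (Equiv.swap u v b)) * 𝕋 (sW r u v) :=
  cT_mul_eq r n κ c₀ c (smat_conj u v a b)

lemma Trefl_def (i j : Fin n) (l : ℤ) :
    𝕋 (reflW r i j l) = 𝕋 (zetaW r i l) * (𝕋 (sW r i j) * 𝕋 (zetaW r i (-l))) := by
  rw [← cT_mul' r n κ c₀ c (sW r i j) (zetaW r i (-l)),
    ← cT_mul' r n κ c₀ c (zetaW r i l)
      ⟨(sW r i j).1 * (zetaW r i (-l)).1, (sW r i j).2.mul (zetaW r i (-l)).2⟩]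
  exact cT_congr r n κ c₀ c (mul_assoc _ _ _)

lemma Tpair_def (i j : Fin n) (l : ℤ) :
    𝕋 (pairW r i j l) = 𝕋 (zetaW r i l) * 𝕋 (zetaW r j (-l)) := by
  rw [← cT_mul' r n κ c₀ c (zetaW r i l) (zetaW r j (-l))]
  exact cT_congr r n κ c₀ c rfl

lemma TreflPer (hr : 0 < r) (i j : Fin n) (l : ℤ) :
    𝕋 (reflW r i j ((l : ℤ) + r)) = 𝕋 (reflW r i j l) := by
  refine cT_congr r n κ c₀ c ?_
  show zmat r n i (l + r) * smat i j * zmat r n i (-(l + r)) = _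
  rw [zmat_per hr, show (-(l + (r : ℤ))) = (-l) - r by ring, zmat_per' hr]
  rfl

lemma TpairPer (hr : 0 < r) (i j : Fin n) (l : ℤ) :
    𝕋 (pairW r i j ((l : ℤ) + r)) = 𝕋 (pairW r i j l) := by
  refine cT_congr r n κ c₀ c ?_
  show zmat r n i (l + r) * zmat r n j (-(l + r)) = _
  rw [zmat_per hr, show (-(l + (r : ℤ))) = (-l) - r by ring, zmat_per' hr]
  rfl

lemma TpairSymm (i j : Fin n) (l : ℤ) : 𝕋 (pairW r i j l) = 𝕋 (pairW r j i (-l)) := by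
  refine cT_congr r n κ c₀ c ?_
  show zmat r n i l * zmat r n j (-l) = zmat r n j (-l) * zmat r n i (- -l)
  rw [neg_neg]
  exact zmat_comm r n i j l (-l)

lemma TreflSymm (i j : Fin n) (l : ℤ) : 𝕋 (reflW r i j l) = 𝕋 (reflW r j i (-l)) := by
  rw [Trefl_def, Trefl_def, neg_neg]
  calc 𝕋 (zetaW r i l) * (𝕋 (sW r i j) * 𝕋 (zetaW r i (-l)))
      = 𝕋 (zetaW r i l) * (𝕋 (zetaW r j (-l)) * 𝕋 (sW r i j)) := by
        rw [TsTzL r n κ c₀ c i j (-l)]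
    _ = 𝕋 (zetaW r j (-l)) * (𝕋 (zetaW r i l) * 𝕋 (sW r i j)) := by
        rw [← mul_assoc, TzComm r n κ c₀ c i j l (-l), mul_assoc]
    _ = 𝕋 (zetaW r j (-l)) * (𝕋 (sW r i j) * 𝕋 (zetaW r j l)) := by
        rw [TsTzR r n κ c₀ c i j l]
    _ = 𝕋 (zetaW r j (-l)) * (𝕋 (sW r j i) * 𝕋 (zetaW r j l)) := by
        rw [TsSymm r n κ c₀ c i j]

lemma TreflTs (u v : Fin n) (l : ℤ) :
    𝕋 (reflW r u v l) * 𝕋 (sW r u v) = 𝕋 (pairW r u v l) := by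
  rw [Trefl_def, Tpair_def, mul_assoc, mul_assoc, ← TsTzR r n κ c₀ c u v (-l),
    ← mul_assoc (𝕋 (sW r u v)), TsTs, one_mul]

lemma TsTrefl (u v i j : Fin n) (l : ℤ) :
    𝕋 (sW r u v) * 𝕋 (reflW r i j l)
      = 𝕋 (reflW r (Equiv.swap u v i) (Equiv.swap u v j) l) * 𝕋 (sW r u v) := by
  rw [Trefl_def, Trefl_def]
  rw [mul_pull (TsTz r n κ c₀ c u v i l), mul_pull (TsConj r n κ c₀ c u v i j),
    TsTz r n κ c₀ c u v i (-l), mul_assoc, mul_assoc]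

lemma TzTreflI (i j : Fin n) (m l : ℤ) :
    𝕋 (zetaW r i m) * 𝕋 (reflW r i j l) = 𝕋 (reflW r i j (l + m)) * 𝕋 (zetaW r i m) := by
  rw [Trefl_def, Trefl_def]
  rw [mul_pull1 (TzTz r n κ c₀ c i m l), mul_assoc, mul_assoc,
    TzTz r n κ c₀ c i (-(l + m)) m, show -(l + m) + m = -l by ring,
    show m + l = l + m by ring]

lemma TzTreflJ (i j : Fin n) (m l : ℤ) :
    𝕋 (zetaW r j m) * 𝕋 (reflW r i j l) = 𝕋 (reflW r i j (l - m)) * 𝕋 (zetaW r j m) := by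
  rw [TreflSymm r n κ c₀ c i j l, TzTreflI r n κ c₀ c j i m (-l),
    TreflSymm r n κ c₀ c j i (-l + m), show -(-l + m) = l - m by ring]

lemma TzTreflO (p i j : Fin n) (hpi : p ≠ i) (hpj : p ≠ j) (m l : ℤ) :
    𝕋 (zetaW r p m) * 𝕋 (reflW r i j l) = 𝕋 (reflW r i j l) * 𝕋 (zetaW r p m) := by
  rw [Trefl_def]
  rw [mul_pull (TzComm r n κ c₀ c p i m l),
    mul_pull ((TsTzO r n κ c₀ c i j p m hpi hpj).symm),
    TzComm r n κ c₀ c p i m (-l), mul_assoc, mul_assoc]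

lemma TzTpairI (i j : Fin n) (m l : ℤ) :
    𝕋 (zetaW r i m) * 𝕋 (pairW r i j l) = 𝕋 (pairW r i j (l + m)) * 𝕋 (zetaW r j m) := by
  rw [Tpair_def, Tpair_def, mul_pull1 (TzTz r n κ c₀ c i m l), mul_assoc,
    TzTz r n κ c₀ c j (-(l + m)) m, show -(l + m) + m = -l by ring,
    show m + l = l + m by ring]

lemma TzTpairJ (i j : Fin n) (m l : ℤ) :
    𝕋 (zetaW r j m) * 𝕋 (pairW r i j l) = 𝕋 (pairW r i j (l - m)) * 𝕋 (zetaW r i m) := by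
  rw [Tpair_def, Tpair_def, mul_pull (TzComm r n κ c₀ c j i m l),
    TzTz r n κ c₀ c j m (-l), mul_assoc, TzComm r n κ c₀ c j i (-(l - m)) m,
    ← mul_assoc, TzTz r n κ c₀ c i (l - m) m, show l - m + m = l by ring,
    show -(l - m) = m + -l by ring]

lemma TzTpairO (p i j : Fin n) (hpi : p ≠ i) (hpj : p ≠ j) (m l : ℤ) :
    𝕋 (zetaW r p m) * 𝕋 (pairW r i j l) = 𝕋 (pairW r i j l) * 𝕋 (zetaW r p m) := by
  rw [Tpair_def, mul_pull (TzComm r n κ c₀ c p i m l), TzComm r n κ c₀ c p j m (-l),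
    mul_assoc]

lemma TzXsame (hr : 0 < r) (k : Fin n) (m : ℤ) :
    𝕋 (zetaW r k m) * 𝕏 k = zeta r ^ (-m) • (𝕏 k * 𝕋 (zetaW r k m)) := by
  have h := TzX r n κ c₀ c hr k m k
  rwa [if_pos rfl] at h

lemma TzXne (hr : 0 < r) {k q : Fin n} (hq : q ≠ k) (m : ℤ) :
    𝕋 (zetaW r k m) * 𝕏 q = 𝕏 q * 𝕋 (zetaW r k m) := by
  have h := TzX r n κ c₀ c hr k m q
  rwa [if_neg hq, one_smul] at h

lemma TzYsame (k : Fin n) (m : ℤ) :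
    𝕋 (zetaW r k m) * 𝕐 k = zeta r ^ m • (𝕐 k * 𝕋 (zetaW r k m)) := by
  have h := TzY r n κ c₀ c k m k
  rwa [if_pos rfl] at h

lemma TzYne {k q : Fin n} (hq : q ≠ k) (m : ℤ) :
    𝕋 (zetaW r k m) * 𝕐 q = 𝕐 q * 𝕋 (zetaW r k m) := by
  have h := TzY r n κ c₀ c k m q
  rwa [if_neg hq, one_smul] at h


/-! ### Specialized x/y moves -/

lemma TsYL (u v : Fin n) : 𝕋 (sW r u v) * 𝕐 u = 𝕐 v * 𝕋 (sW r u v) := by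
  have h := TsY r n κ c₀ c u v u
  rwa [Equiv.swap_apply_left] at h

lemma TsYR (u v : Fin n) : 𝕋 (sW r u v) * 𝕐 v = 𝕐 u * 𝕋 (sW r u v) := by
  have h := TsY r n κ c₀ c u v v
  rwa [Equiv.swap_apply_right] at h

lemma TsYO (u v : Fin n) {q : Fin n} (h1 : q ≠ u) (h2 : q ≠ v) :
    𝕋 (sW r u v) * 𝕐 q = 𝕐 q * 𝕋 (sW r u v) := by
  have h := TsY r n κ c₀ c u v q
  rwa [Equiv.swap_apply_of_ne_of_ne h1 h2] at h

lemma TsXL (hr : 0 < r) (u v : Fin n) : 𝕋 (sW r u v) * 𝕏 u = 𝕏 v * 𝕋 (sW r u v) := by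
  have h := TsX r n κ c₀ c hr u v u
  rwa [Equiv.swap_apply_left] at h

lemma TsXR (hr : 0 < r) (u v : Fin n) : 𝕋 (sW r u v) * 𝕏 v = 𝕏 u * 𝕋 (sW r u v) := by
  have h := TsX r n κ c₀ c hr u v v
  rwa [Equiv.swap_apply_right] at h

lemma TsXO (hr : 0 < r) (u v : Fin n) {q : Fin n} (h1 : q ≠ u) (h2 : q ≠ v) :
    𝕋 (sW r u v) * 𝕏 q = 𝕏 q * 𝕋 (sW r u v) := by
  have h := TsX r n κ c₀ c hr u v q
  rwa [Equiv.swap_apply_of_ne_of_ne h1 h2] at h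

lemma zeta_cancel (l : ℤ) : zeta r ^ l * zeta r ^ (-l) = 1 := by
  rw [← zeta_zpow_add]
  simp

lemma zeta_cancel' (l : ℤ) : zeta r ^ (-l) * zeta r ^ l = 1 := by
  rw [← zeta_zpow_add]
  simp

/-! ### Reflections versus `x`s and `y`s -/

lemma TreflY_i (hr : 0 < r) {i j : Fin n} (hij : i ≠ j) (l : ℤ) :
    𝕋 (reflW r i j l) * 𝕐 i = zeta r ^ (-l) • (𝕐 j * 𝕋 (reflW r i j l)) := by
  rw [Trefl_def, mul_assoc, mul_assoc, TzYsame r n κ c₀ c i (-l)]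
  simp only [mul_smul_comm]
  rw [mul_pull (TsYL r n κ c₀ c i j), mul_pull (TzYne r n κ c₀ c (hij.symm) l)]

lemma TreflY_j (hr : 0 < r) {i j : Fin n} (hij : i ≠ j) (l : ℤ) :
    𝕋 (reflW r i j l) * 𝕐 j = zeta r ^ l • (𝕐 i * 𝕋 (reflW r i j l)) := by
  rw [Trefl_def, mul_assoc, mul_assoc, TzYne r n κ c₀ c (hij.symm) (-l),
    mul_pull (TsYR r n κ c₀ c i j), ← mul_assoc, TzYsame r n κ c₀ c i l,
    smul_mul_assoc, mul_assoc]

lemma TreflY_o (hr : 0 < r) {i j k : Fin n} (hki : k ≠ i) (hkj : k ≠ j) (l : ℤ) :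
    𝕋 (reflW r i j l) * 𝕐 k = 𝕐 k * 𝕋 (reflW r i j l) := by
  rw [Trefl_def, mul_assoc, mul_assoc, TzYne r n κ c₀ c hki (-l),
    mul_pull (TsYO r n κ c₀ c i j hki hkj), ← mul_assoc,
    TzYne r n κ c₀ c hki l, mul_assoc]

lemma TreflX_i (hr : 0 < r) {i j : Fin n} (hij : i ≠ j) (l : ℤ) :
    𝕋 (reflW r i j l) * 𝕏 i = zeta r ^ l • (𝕏 j * 𝕋 (reflW r i j l)) := by
  rw [Trefl_def, mul_assoc, mul_assoc, TzXsame r n κ c₀ c hr i (-l), neg_neg]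
  simp only [mul_smul_comm]
  rw [mul_pull (TsXL r n κ c₀ c hr i j), mul_pull (TzXne r n κ c₀ c hr (hij.symm) l)]

lemma TreflX_j (hr : 0 < r) {i j : Fin n} (hij : i ≠ j) (l : ℤ) :
    𝕋 (reflW r i j l) * 𝕏 j = zeta r ^ (-l) • (𝕏 i * 𝕋 (reflW r i j l)) := by
  rw [Trefl_def, mul_assoc, mul_assoc, TzXne r n κ c₀ c hr (hij.symm) (-l),
    mul_pull (TsXR r n κ c₀ c hr i j), ← mul_assoc, TzXsame r n κ c₀ c hr i l,
    smul_mul_assoc, mul_assoc]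

lemma TreflX_o (hr : 0 < r) {i j k : Fin n} (hki : k ≠ i) (hkj : k ≠ j) (l : ℤ) :
    𝕋 (reflW r i j l) * 𝕏 k = 𝕏 k * 𝕋 (reflW r i j l) := by
  rw [Trefl_def, mul_assoc, mul_assoc, TzXne r n κ c₀ c hr hki (-l),
    mul_pull (TsXO r n κ c₀ c hr i j hki hkj), ← mul_assoc,
    TzXne r n κ c₀ c hr hki l, mul_assoc]

lemma TreflYX_i (hr : 0 < r) {i j : Fin n} (hij : i ≠ j) (l : ℤ) :
    𝕋 (reflW r i j l) * (𝕐 i * 𝕏 i) = (𝕐 j * 𝕏 j) * 𝕋 (reflW r i j l) := by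
  rw [← mul_assoc, TreflY_i r n κ c₀ c hr hij l, smul_mul_assoc, mul_assoc,
    TreflX_i r n κ c₀ c hr hij l, mul_smul_comm, smul_smul, zeta_cancel',
    one_smul, mul_assoc]

lemma TreflYX_j (hr : 0 < r) {i j : Fin n} (hij : i ≠ j) (l : ℤ) :
    𝕋 (reflW r i j l) * (𝕐 j * 𝕏 j) = (𝕐 i * 𝕏 i) * 𝕋 (reflW r i j l) := by
  rw [← mul_assoc, TreflY_j r n κ c₀ c hr hij l, smul_mul_assoc, mul_assoc,
    TreflX_j r n κ c₀ c hr hij l, mul_smul_comm, smul_smul, zeta_cancel,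
    one_smul, mul_assoc]

lemma TreflYX_o (hr : 0 < r) {i j k : Fin n} (hki : k ≠ i) (hkj : k ≠ j) (l : ℤ) :
    𝕋 (reflW r i j l) * (𝕐 k * 𝕏 k) = (𝕐 k * 𝕏 k) * 𝕋 (reflW r i j l) := by
  rw [← mul_assoc, TreflY_o r n κ c₀ c hr hki hkj l, mul_assoc,
    TreflX_o r n κ c₀ c hr hki hkj l, mul_assoc]

lemma YTrefl (hr : 0 < r) {i j : Fin n} (hij : i ≠ j) (l : ℤ) :
    𝕐 j * 𝕋 (reflW r i j l) = zeta r ^ l • (𝕋 (reflW r i j l) * 𝕐 i) := by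
  rw [TreflY_i r n κ c₀ c hr hij l, smul_smul, zeta_cancel, one_smul]

lemma TzYX (hr : 0 < r) (k p : Fin n) (m : ℤ) :
    𝕋 (zetaW r k m) * (𝕐 p * 𝕏 p) = (𝕐 p * 𝕏 p) * 𝕋 (zetaW r k m) := by
  rcases eq_or_ne p k with rfl | hp
  · rw [← mul_assoc, TzYsame r n κ c₀ c p m, smul_mul_assoc, mul_assoc,
      TzXsame r n κ c₀ c hr p m, mul_smul_comm, smul_smul, zeta_cancel,
      one_smul, mul_assoc]
  · rw [← mul_assoc, TzYne r n κ c₀ c hp m, mul_assoc, TzXne r n κ c₀ c hr hp m,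
      mul_assoc]

lemma TsYX (hr : 0 < r) (u v q : Fin n) :
    𝕋 (sW r u v) * (𝕐 q * 𝕏 q)
      = (𝕐 (Equiv.swap u v q) * 𝕏 (Equiv.swap u v q)) * 𝕋 (sW r u v) := by
  rw [← mul_assoc, TsY r n κ c₀ c u v q, mul_assoc, TsX r n κ c₀ c hr u v q, mul_assoc]


/-! ### The sums `Φ_{ij}` and `π_{ij}` -/

/-- `Φ_{ij} = Σ_l t_{ζ_i^l s_{ij} ζ_i^{-l}}`. -/
noncomputable def PhiD (i j : Fin n) : RingQuot (CRel r n κ c₀ c) :=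
  ∑ l ∈ Finset.range r, cT r n κ c₀ c (reflW r i j (l : ℤ))

lemma cPhi_eq (i : Fin n) :
    cPhi r n κ c₀ c i
      = ∑ j ∈ Finset.univ.filter (fun j : Fin n => j < i), PhiD r n κ c₀ c i j := rfl

lemma TzPhi (hr : 0 < r) (p i j : Fin n) (m : ℤ) :
    𝕋 (zetaW r p m) * PhiD r n κ c₀ c i j = PhiD r n κ c₀ c i j * 𝕋 (zetaW r p m) := by
  simp only [PhiD, Finset.mul_sum, Finset.sum_mul]
  rcases eq_or_ne p i with rfl | hpi
  · calc ∑ l ∈ Finset.range r, 𝕋 (zetaW r p m) * 𝕋 (reflW r p j (l : ℤ))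
        = ∑ l ∈ Finset.range r, 𝕋 (reflW r p j ((l : ℤ) + m)) * 𝕋 (zetaW r p m) :=
          Finset.sum_congr rfl fun l _ => TzTreflI r n κ c₀ c p j m l
      _ = _ := sum_range_shift r (fun z => 𝕋 (reflW r p j z) * 𝕋 (zetaW r p m))
          (fun z => congrArg (· * 𝕋 (zetaW r p m)) (TreflPer r n κ c₀ c hr p j z)) m
  · rcases eq_or_ne p j with rfl | hpj
    · calc ∑ l ∈ Finset.range r, 𝕋 (zetaW r p m) * 𝕋 (reflW r i p (l : ℤ))
          = ∑ l ∈ Finset.range r, 𝕋 (reflW r i p ((l : ℤ) + (-m))) * 𝕋 (zetaW r p m) :=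
            Finset.sum_congr rfl fun l _ => by
              rw [TzTreflJ r n κ c₀ c i p m (l : ℤ),
                show (l : ℤ) - m = (l : ℤ) + (-m) by ring]
        _ = _ := sum_range_shift r (fun z => 𝕋 (reflW r i p z) * 𝕋 (zetaW r p m))
            (fun z => congrArg (· * 𝕋 (zetaW r p m)) (TreflPer r n κ c₀ c hr i p z)) (-m)
    · exact Finset.sum_congr rfl fun l _ => TzTreflO r n κ c₀ c p i j hpi hpj m (l : ℤ)

lemma TsPhi (u v i j : Fin n) :
    𝕋 (sW r u v) * PhiD r n κ c₀ c i j
      = PhiD r n κ c₀ c (Equiv.swap u v i) (Equiv.swap u v j) * 𝕋 (sW r u v) := by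
  simp only [PhiD, Finset.mul_sum, Finset.sum_mul]
  exact Finset.sum_congr rfl fun l _ => TsTrefl r n κ c₀ c u v i j (l : ℤ)

lemma PhiSymm (hr : 0 < r) (i j : Fin n) : PhiD r n κ c₀ c i j = PhiD r n κ c₀ c j i := by
  simp only [PhiD]
  calc ∑ l ∈ Finset.range r, 𝕋 (reflW r i j (l : ℤ))
      = ∑ l ∈ Finset.range r, 𝕋 (reflW r j i (-(l : ℤ))) :=
        Finset.sum_congr rfl fun l _ => TreflSymm r n κ c₀ c i j (l : ℤ)
    _ = _ := sum_range_neg r (fun z => 𝕋 (reflW r j i z))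
        (fun z => TreflPer r n κ c₀ c hr j i z)

lemma PhiTs (u v : Fin n) :
    PhiD r n κ c₀ c u v * 𝕋 (sW r u v) = cPi r n κ c₀ c u v := by
  simp only [PhiD, cPi, Finset.sum_mul]
  exact Finset.sum_congr rfl fun l _ => TreflTs r n κ c₀ c u v (l : ℤ)

lemma TsPhiP (hr : 0 < r) (u v : Fin n) :
    𝕋 (sW r u v) * PhiD r n κ c₀ c u v = cPi r n κ c₀ c u v := by
  have h := TsPhi r n κ c₀ c u v u v
  rw [Equiv.swap_apply_left, Equiv.swap_apply_right] at h
  rw [h]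
  simp only [PhiD, cPi, Finset.sum_mul]
  calc ∑ l ∈ Finset.range r, 𝕋 (reflW r v u (l : ℤ)) * 𝕋 (sW r u v)
      = ∑ l ∈ Finset.range r, 𝕋 (pairW r u v (-(l : ℤ))) :=
        Finset.sum_congr rfl fun l _ => by
          rw [TreflSymm r n κ c₀ c v u (l : ℤ)]
          exact TreflTs r n κ c₀ c u v (-(l : ℤ))
    _ = _ := sum_range_neg r (fun z => 𝕋 (pairW r u v z))
        (fun z => TpairPer r n κ c₀ c hr u v z)

lemma TzPiI (hr : 0 < r) (i j : Fin n) (m : ℤ) :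
    𝕋 (zetaW r i m) * cPi r n κ c₀ c i j = cPi r n κ c₀ c i j * 𝕋 (zetaW r j m) := by
  simp only [cPi, Finset.mul_sum, Finset.sum_mul]
  calc ∑ l ∈ Finset.range r, 𝕋 (zetaW r i m) * 𝕋 (pairW r i j (l : ℤ))
      = ∑ l ∈ Finset.range r, 𝕋 (pairW r i j ((l : ℤ) + m)) * 𝕋 (zetaW r j m) :=
        Finset.sum_congr rfl fun l _ => TzTpairI r n κ c₀ c i j m (l : ℤ)
    _ = _ := sum_range_shift r (fun z => 𝕋 (pairW r i j z) * 𝕋 (zetaW r j m))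
        (fun z => congrArg (· * 𝕋 (zetaW r j m)) (TpairPer r n κ c₀ c hr i j z)) m

lemma TzPiJ (hr : 0 < r) (i j : Fin n) (m : ℤ) :
    𝕋 (zetaW r j m) * cPi r n κ c₀ c i j = cPi r n κ c₀ c i j * 𝕋 (zetaW r i m) := by
  simp only [cPi, Finset.mul_sum, Finset.sum_mul]
  calc ∑ l ∈ Finset.range r, 𝕋 (zetaW r j m) * 𝕋 (pairW r i j (l : ℤ))
      = ∑ l ∈ Finset.range r, 𝕋 (pairW r i j ((l : ℤ) + (-m))) * 𝕋 (zetaW r i m) :=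
        Finset.sum_congr rfl fun l _ => by
          rw [TzTpairJ r n κ c₀ c i j m (l : ℤ),
            show (l : ℤ) - m = (l : ℤ) + (-m) by ring]
    _ = _ := sum_range_shift r (fun z => 𝕋 (pairW r i j z) * 𝕋 (zetaW r i m))
        (fun z => congrArg (· * 𝕋 (zetaW r i m)) (TpairPer r n κ c₀ c hr i j z)) (-m)

lemma TzPiO (p i j : Fin n) (hpi : p ≠ i) (hpj : p ≠ j) (m : ℤ) :
    𝕋 (zetaW r p m) * cPi r n κ c₀ c i j = cPi r n κ c₀ c i j * 𝕋 (zetaW r p m) := by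
  simp only [cPi, Finset.mul_sum, Finset.sum_mul]
  exact Finset.sum_congr rfl fun l _ => TzTpairO r n κ c₀ c p i j hpi hpj m (l : ℤ)

lemma TzCPhi (hr : 0 < r) (k p : Fin n) (m : ℤ) :
    𝕋 (zetaW r k m) * cPhi r n κ c₀ c p = cPhi r n κ c₀ c p * 𝕋 (zetaW r k m) := by
  rw [cPhi_eq, Finset.mul_sum, Finset.sum_mul]
  exact Finset.sum_congr rfl fun j _ => TzPhi r n κ c₀ c hr k p j m

lemma TzCz (hr : 0 < r) (k p : Fin n) (m : ℤ) :
    𝕋 (zetaW r k m) * cz r n κ c₀ c p = cz r n κ c₀ c p * 𝕋 (zetaW r k m) := by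
  simp only [cz]
  rw [mul_add, add_mul, TzYX r n κ c₀ c hr k p m, mul_smul_comm, smul_mul_assoc,
    TzCPhi r n κ c₀ c hr k p m]

lemma TpairCz (hr : 0 < r) (i j : Fin n) (l : ℤ) (p : Fin n) :
    𝕋 (pairW r i j l) * cz r n κ c₀ c p = cz r n κ c₀ c p * 𝕋 (pairW r i j l) := by
  rw [Tpair_def, mul_assoc, TzCz r n κ c₀ c hr j p (-l), ← mul_assoc,
    TzCz r n κ c₀ c hr i p l, mul_assoc]

lemma cPiCz (hr : 0 < r) (i j p : Fin n) :
    cPi r n κ c₀ c i j * cz r n κ c₀ c p = cz r n κ c₀ c p * cPi r n κ c₀ c i j := by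
  simp only [cPi, Finset.mul_sum, Finset.sum_mul]
  exact Finset.sum_congr rfl fun l _ => TpairCz r n κ c₀ c hr i j (l : ℤ) p


/-! ### The transposition versus the Dunkl–Opdam elements -/

lemma cPiSymm (hr : 0 < r) (i j : Fin n) : cPi r n κ c₀ c i j = cPi r n κ c₀ c j i := by
  simp only [cPi]
  calc ∑ l ∈ Finset.range r, 𝕋 (pairW r i j (l : ℤ))
      = ∑ l ∈ Finset.range r, 𝕋 (pairW r j i (-(l : ℤ))) :=
        Finset.sum_congr rfl fun l _ => TpairSymm r n κ c₀ c i j (l : ℤ)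
    _ = _ := sum_range_neg r (fun z => 𝕋 (pairW r j i z))
        (fun z => TpairPer r n κ c₀ c hr j i z)

lemma filter_lt_succ {i i' : Fin n} (h : (i' : ℕ) = (i : ℕ) + 1) :
    Finset.univ.filter (fun j : Fin n => j < i')
      = insert i (Finset.univ.filter (fun j : Fin n => j < i)) := by
  ext m
  simp only [Finset.mem_filter, Finset.mem_insert, Finset.mem_univ, true_and, Fin.lt_def,
    Fin.ext_iff]
  omega

lemma not_mem_filt (i : Fin n) : i ∉ Finset.univ.filter (fun j : Fin n => j < i) := by
  simp

lemma ne_of_adj {i i' : Fin n} (h : (i' : ℕ) = (i : ℕ) + 1) : i ≠ i' := by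
  intro hc
  rw [Fin.ext_iff] at hc
  omega

lemma TsCPhi_up (hr : 0 < r) {i i' : Fin n} (h : (i' : ℕ) = (i : ℕ) + 1) :
    𝕋 (sW r i i') * cPhi r n κ c₀ c i'
      = cPhi r n κ c₀ c i * 𝕋 (sW r i i') + cPi r n κ c₀ c i i' := by
  rw [cPhi_eq r n κ c₀ c i', filter_lt_succ n h, Finset.sum_insert (not_mem_filt n i),
    mul_add]
  have h1 : 𝕋 (sW r i i') * PhiD r n κ c₀ c i' i = cPi r n κ c₀ c i i' := by
    have h2 := TsPhi r n κ c₀ c i i' i' i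
    rw [Equiv.swap_apply_left, Equiv.swap_apply_right] at h2
    rw [h2, PhiTs r n κ c₀ c i i']
  have h3 : 𝕋 (sW r i i') * ∑ j ∈ Finset.univ.filter (fun j : Fin n => j < i),
      PhiD r n κ c₀ c i' j
      = cPhi r n κ c₀ c i * 𝕋 (sW r i i') := by
    rw [Finset.mul_sum, cPhi_eq r n κ c₀ c i, Finset.sum_mul]
    refine Finset.sum_congr rfl fun j hj => ?_
    have hj' : j < i := (Finset.mem_filter.mp hj).2
    have hji : j ≠ i := ne_of_lt hj'
    have hji' : j ≠ i' := by
      intro hc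
      rw [Fin.lt_def] at hj'
      rw [Fin.ext_iff] at hc
      omega
    have h4 := TsPhi r n κ c₀ c i i' i' j
    rwa [Equiv.swap_apply_right, Equiv.swap_apply_of_ne_of_ne hji hji'] at h4
  rw [h1, h3]
  abel

lemma TsCPhi_dn (hr : 0 < r) {i i' : Fin n} (h : (i' : ℕ) = (i : ℕ) + 1) :
    𝕋 (sW r i i') * cPhi r n κ c₀ c i
      = cPhi r n κ c₀ c i' * 𝕋 (sW r i i') - cPi r n κ c₀ c i i' := by
  have hsplit : cPhi r n κ c₀ c i' * 𝕋 (sW r i i')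
      = PhiD r n κ c₀ c i' i * 𝕋 (sW r i i')
        + (∑ j ∈ Finset.univ.filter (fun j : Fin n => j < i), PhiD r n κ c₀ c i' j)
          * 𝕋 (sW r i i') := by
    rw [cPhi_eq r n κ c₀ c i', filter_lt_succ n h, Finset.sum_insert (not_mem_filt n i), add_mul]
  have h1 : PhiD r n κ c₀ c i' i * 𝕋 (sW r i i') = cPi r n κ c₀ c i i' := by
    rw [TsSymm r n κ c₀ c i i', PhiTs r n κ c₀ c i' i, cPiSymm r n κ c₀ c hr i' i]
  have h2 : 𝕋 (sW r i i') * cPhi r n κ c₀ c i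
      = (∑ j ∈ Finset.univ.filter (fun j : Fin n => j < i), PhiD r n κ c₀ c i' j)
        * 𝕋 (sW r i i') := by
    rw [cPhi_eq r n κ c₀ c i, Finset.mul_sum, Finset.sum_mul]
    refine Finset.sum_congr rfl fun j hj => ?_
    have hj' : j < i := (Finset.mem_filter.mp hj).2
    have hji : j ≠ i := ne_of_lt hj'
    have hji' : j ≠ i' := by
      intro hc
      rw [Fin.lt_def] at hj'
      rw [Fin.ext_iff] at hc
      omega
    have h4 := TsPhi r n κ c₀ c i i' i j
    rwa [Equiv.swap_apply_left, Equiv.swap_apply_of_ne_of_ne hji hji'] at h4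
  rw [hsplit, h1, h2]
  abel

lemma TsCPhi_other (hr : 0 < r) {i i' : Fin n} (h : (i' : ℕ) = (i : ℕ) + 1)
    {j : Fin n} (hji : j ≠ i) (hji' : j ≠ i') :
    𝕋 (sW r i i') * cPhi r n κ c₀ c j = cPhi r n κ c₀ c j * 𝕋 (sW r i i') := by
  have hj1 : (j : ℕ) ≠ (i : ℕ) := fun hc => hji (Fin.ext hc)
  have hj2 : (j : ℕ) ≠ (i' : ℕ) := fun hc => hji' (Fin.ext hc)
  rw [cPhi_eq r n κ c₀ c j, Finset.mul_sum, Finset.sum_mul]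
  have key : ∀ m : Fin n, Equiv.swap i i' m < j ↔ m < j := by
    intro m
    rcases eq_or_ne m i with rfl | hmi
    · rw [Equiv.swap_apply_left, Fin.lt_def, Fin.lt_def]
      omega
    · rcases eq_or_ne m i' with rfl | hmi'
      · rw [Equiv.swap_apply_right, Fin.lt_def, Fin.lt_def]
        omega
      · rw [Equiv.swap_apply_of_ne_of_ne hmi hmi']
  calc ∑ m ∈ Finset.univ.filter (fun m : Fin n => m < j),
        𝕋 (sW r i i') * PhiD r n κ c₀ c j m
      = ∑ m ∈ Finset.univ.filter (fun m : Fin n => m < j),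
          PhiD r n κ c₀ c j (Equiv.swap i i' m) * 𝕋 (sW r i i') := by
        refine Finset.sum_congr rfl fun m _ => ?_
        have h4 := TsPhi r n κ c₀ c i i' j m
        rwa [Equiv.swap_apply_of_ne_of_ne hji hji'] at h4
    _ = ∑ m ∈ Finset.univ.filter (fun m : Fin n => m < j),
          PhiD r n κ c₀ c j m * 𝕋 (sW r i i') := by
        refine Finset.sum_equiv (Equiv.swap i i') (fun m => ?_) (fun m _ => rfl)
        simp only [Finset.mem_filter, Finset.mem_univ, true_and]
        exact (key m).symm

lemma TsCz_up (hr : 0 < r) {i i' : Fin n} (h : (i' : ℕ) = (i : ℕ) + 1) :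
    𝕋 (sW r i i') * cz r n κ c₀ c i'
      = cz r n κ c₀ c i * 𝕋 (sW r i i') + c₀ • cPi r n κ c₀ c i i' := by
  have hyx := TsYX r n κ c₀ c hr i i' i'
  rw [Equiv.swap_apply_right] at hyx
  simp only [cz, mul_add, add_mul, mul_smul_comm, smul_mul_assoc]
  rw [hyx, TsCPhi_up r n κ c₀ c hr h, smul_add]
  abel

lemma TsCz_dn (hr : 0 < r) {i i' : Fin n} (h : (i' : ℕ) = (i : ℕ) + 1) :
    𝕋 (sW r i i') * cz r n κ c₀ c i
      = cz r n κ c₀ c i' * 𝕋 (sW r i i') - c₀ • cPi r n κ c₀ c i i' := by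
  have hyx := TsYX r n κ c₀ c hr i i' i
  rw [Equiv.swap_apply_left] at hyx
  simp only [cz, mul_add, add_mul, mul_smul_comm, smul_mul_assoc]
  rw [hyx, TsCPhi_dn r n κ c₀ c hr h, smul_sub]
  abel

lemma TsCz_other (hr : 0 < r) {i i' : Fin n} (h : (i' : ℕ) = (i : ℕ) + 1)
    {j : Fin n} (hji : j ≠ i) (hji' : j ≠ i') :
    𝕋 (sW r i i') * cz r n κ c₀ c j = cz r n κ c₀ c j * 𝕋 (sW r i i') := by
  have hyx := TsYX r n κ c₀ c hr i i' j
  rw [Equiv.swap_apply_of_ne_of_ne hji hji'] at hyx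
  simp only [cz, mul_add, add_mul, mul_smul_comm, smul_mul_assoc]
  rw [hyx, TsCPhi_other r n κ c₀ c hr h hji hji']


/-! ### Commutativity of the Dunkl–Opdam elements -/

/-- The sum appearing in the commutation relation `[y_i, x_j]`. -/
noncomputable def SS (i j : Fin n) : RingQuot (CRel r n κ c₀ c) :=
  ∑ l ∈ Finset.range r, (zeta r ^ (-(l : ℤ))) • cT r n κ c₀ c (reflW r i j (l : ℤ))

lemma YXne' {i j : Fin n} (hij : i ≠ j) :
    𝕐 i * 𝕏 j = 𝕏 j * 𝕐 i + c₀ • SS r n κ c₀ c i j :=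
  YXne r n κ c₀ c hij

lemma YSS (hr : 0 < r) {p q : Fin n} (hpq : p ≠ q) :
    𝕐 q * SS r n κ c₀ c p q = PhiD r n κ c₀ c p q * 𝕐 p := by
  simp only [SS, PhiD, Finset.mul_sum, Finset.sum_mul]
  refine Finset.sum_congr rfl fun l _ => ?_
  rw [mul_smul_comm, YTrefl r n κ c₀ c hr hpq (l : ℤ), smul_smul, zeta_cancel', one_smul]

lemma PhiYX_i (hr : 0 < r) {p q : Fin n} (hpq : p ≠ q) :
    PhiD r n κ c₀ c p q * (𝕐 p * 𝕏 p) = (𝕐 q * 𝕏 q) * PhiD r n κ c₀ c p q := by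
  simp only [PhiD, Finset.sum_mul, Finset.mul_sum]
  exact Finset.sum_congr rfl fun l _ => TreflYX_i r n κ c₀ c hr hpq (l : ℤ)

lemma PhiYX_j (hr : 0 < r) {p q : Fin n} (hpq : p ≠ q) :
    PhiD r n κ c₀ c p q * (𝕐 q * 𝕏 q) = (𝕐 p * 𝕏 p) * PhiD r n κ c₀ c p q := by
  simp only [PhiD, Finset.sum_mul, Finset.mul_sum]
  exact Finset.sum_congr rfl fun l _ => TreflYX_j r n κ c₀ c hr hpq (l : ℤ)

lemma PhiYX_o (hr : 0 < r) {p q k : Fin n} (hkp : k ≠ p) (hkq : k ≠ q) :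
    PhiD r n κ c₀ c p q * (𝕐 k * 𝕏 k) = (𝕐 k * 𝕏 k) * PhiD r n κ c₀ c p q := by
  simp only [PhiD, Finset.sum_mul, Finset.mul_sum]
  exact Finset.sum_congr rfl fun l _ => TreflYX_o r n κ c₀ c hr hkp hkq (l : ℤ)

lemma starYX (hr : 0 < r) {p q : Fin n} (hpq : p ≠ q) :
    (𝕐 p * 𝕏 p) * (𝕐 q * 𝕏 q)
      = 𝕐 p * (𝕐 q * (𝕏 p * 𝕏 q)) - c₀ • (PhiD r n κ c₀ c p q * (𝕐 q * 𝕏 q)) := by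
  have hxy : 𝕏 p * 𝕐 q = 𝕐 q * 𝕏 p - c₀ • SS r n κ c₀ c q p := by
    rw [YXne' r n κ c₀ c hpq.symm]
    abel
  calc (𝕐 p * 𝕏 p) * (𝕐 q * 𝕏 q)
      = 𝕐 p * ((𝕏 p * 𝕐 q) * 𝕏 q) := by rw [mul_assoc, ← mul_assoc (𝕏 p)]
    _ = 𝕐 p * ((𝕐 q * 𝕏 p) * 𝕏 q) - c₀ • (𝕐 p * (SS r n κ c₀ c q p * 𝕏 q)) := by
        rw [hxy, sub_mul, mul_sub, smul_mul_assoc, mul_smul_comm]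
    _ = 𝕐 p * (𝕐 q * (𝕏 p * 𝕏 q)) - c₀ • ((𝕐 p * SS r n κ c₀ c q p) * 𝕏 q) := by
        rw [mul_assoc (𝕐 q), ← mul_assoc (𝕐 p) (SS r n κ c₀ c q p)]
    _ = 𝕐 p * (𝕐 q * (𝕏 p * 𝕏 q)) - c₀ • (PhiD r n κ c₀ c p q * (𝕐 q * 𝕏 q)) := by
        rw [YSS r n κ c₀ c hr hpq.symm, PhiSymm r n κ c₀ c hr q p, mul_assoc]

lemma starComm (hr : 0 < r) {p q : Fin n} (hpq : p ≠ q) :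
    (𝕐 p * 𝕏 p) * (𝕐 q * 𝕏 q) + c₀ • (PhiD r n κ c₀ c p q * (𝕐 q * 𝕏 q))
      = (𝕐 q * 𝕏 q) * (𝕐 p * 𝕏 p) + c₀ • (PhiD r n κ c₀ c p q * (𝕐 p * 𝕏 p)) := by
  have h1 := starYX r n κ c₀ c hr hpq
  have h2 := starYX r n κ c₀ c hr hpq.symm
  rw [PhiSymm r n κ c₀ c hr q p] at h2
  have hyyxx : 𝕐 p * (𝕐 q * (𝕏 p * 𝕏 q)) = 𝕐 q * (𝕐 p * (𝕏 q * 𝕏 p)) := by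
    rw [XX r n κ c₀ c p q, ← mul_assoc, YY r n κ c₀ c p q, mul_assoc]
  rw [h1, h2, hyyxx]
  abel

lemma cPhiYX (hr : 0 < r) {p q : Fin n} (hqp : q < p) :
    cPhi r n κ c₀ c p * (𝕐 q * 𝕏 q) + (𝕐 q * 𝕏 q) * PhiD r n κ c₀ c p q
      = (𝕐 q * 𝕏 q) * cPhi r n κ c₀ c p + PhiD r n κ c₀ c p q * (𝕐 q * 𝕏 q) := by
  have hq : q ∈ Finset.univ.filter (fun j : Fin n => j < p) := by
    simp [hqp]
  have hsplit : cPhi r n κ c₀ c p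
      = PhiD r n κ c₀ c p q
        + ∑ k ∈ (Finset.univ.filter (fun j : Fin n => j < p)).erase q,
            PhiD r n κ c₀ c p k := by
    rw [cPhi_eq r n κ c₀ c p, ← Finset.add_sum_erase _ _ hq]
  have hR : (∑ k ∈ (Finset.univ.filter (fun j : Fin n => j < p)).erase q,
        PhiD r n κ c₀ c p k) * (𝕐 q * 𝕏 q)
      = (𝕐 q * 𝕏 q) * ∑ k ∈ (Finset.univ.filter (fun j : Fin n => j < p)).erase q,
          PhiD r n κ c₀ c p k := by
    rw [Finset.sum_mul, Finset.mul_sum]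
    refine Finset.sum_congr rfl fun k hk => ?_
    have hkq : k ≠ q := (Finset.mem_erase.mp hk).1
    have hkp : k < p := (Finset.mem_filter.mp (Finset.mem_erase.mp hk).2).2
    exact PhiYX_o r n κ c₀ c hr (ne_of_lt hqp) hkq.symm
  rw [hsplit, add_mul, mul_add, hR]
  abel

lemma cPhiYX_zero (hr : 0 < r) {p q : Fin n} (hqp : q < p) :
    cPhi r n κ c₀ c q * (𝕐 p * 𝕏 p) = (𝕐 p * 𝕏 p) * cPhi r n κ c₀ c q := by
  rw [cPhi_eq r n κ c₀ c q, Finset.sum_mul, Finset.mul_sum]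
  refine Finset.sum_congr rfl fun m hm => ?_
  have hmq : m < q := (Finset.mem_filter.mp hm).2
  exact PhiYX_o r n κ c₀ c hr (ne_of_gt hqp) (ne_of_gt (hmq.trans hqp))

lemma TsPhiFull (hr : 0 < r) {u v p : Fin n} (hu : u < p) (hv : v < p) :
    𝕋 (sW r u v) * cPhi r n κ c₀ c p = cPhi r n κ c₀ c p * 𝕋 (sW r u v) := by
  rw [cPhi_eq r n κ c₀ c p, Finset.mul_sum, Finset.sum_mul]
  have key : ∀ m : Fin n, Equiv.swap u v m < p ↔ m < p := by
    intro m
    rcases eq_or_ne m u with rfl | hmu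
    · rw [Equiv.swap_apply_left]
      exact ⟨fun _ => hu, fun _ => hv⟩
    · rcases eq_or_ne m v with rfl | hmv
      · rw [Equiv.swap_apply_right]
        exact ⟨fun _ => hv, fun _ => hu⟩
      · rw [Equiv.swap_apply_of_ne_of_ne hmu hmv]
  calc ∑ k ∈ Finset.univ.filter (fun j : Fin n => j < p),
        𝕋 (sW r u v) * PhiD r n κ c₀ c p k
      = ∑ k ∈ Finset.univ.filter (fun j : Fin n => j < p),
          PhiD r n κ c₀ c p (Equiv.swap u v k) * 𝕋 (sW r u v) := by
        refine Finset.sum_congr rfl fun k _ => ?_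
        have h4 := TsPhi r n κ c₀ c u v p k
        rwa [Equiv.swap_apply_of_ne_of_ne (ne_of_gt hu) (ne_of_gt hv)] at h4
    _ = ∑ k ∈ Finset.univ.filter (fun j : Fin n => j < p),
          PhiD r n κ c₀ c p k * 𝕋 (sW r u v) := by
        refine Finset.sum_equiv (Equiv.swap u v) (fun m => ?_) (fun m _ => rfl)
        simp only [Finset.mem_filter, Finset.mem_univ, true_and]
        exact (key m).symm

lemma TreflCPhi (hr : 0 < r) {p q m : Fin n} (hq : q < p) (hm : m < p) (l' : ℤ) :
    𝕋 (reflW r q m l') * cPhi r n κ c₀ c p = cPhi r n κ c₀ c p * 𝕋 (reflW r q m l') := by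
  rw [Trefl_def, mul_assoc, mul_assoc, TzCPhi r n κ c₀ c hr q p (-l'),
    mul_pull (TsPhiFull r n κ c₀ c hr hq hm), ← mul_assoc,
    TzCPhi r n κ c₀ c hr q p l', mul_assoc]

lemma cPhiCPhi (hr : 0 < r) {p q : Fin n} (hqp : q < p) :
    cPhi r n κ c₀ c q * cPhi r n κ c₀ c p = cPhi r n κ c₀ c p * cPhi r n κ c₀ c q := by
  rw [cPhi_eq r n κ c₀ c q]
  simp only [PhiD, Finset.sum_mul, Finset.mul_sum]
  refine Finset.sum_congr rfl fun m hm => Finset.sum_congr rfl fun l _ => ?_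
  have hmq : m < q := (Finset.mem_filter.mp hm).2
  exact TreflCPhi r n κ c₀ c hr hqp (hmq.trans hqp) (l : ℤ)

lemma czComm' (hr : 0 < r) {p q : Fin n} (hqp : q < p) :
    cz r n κ c₀ c p * cz r n κ c₀ c q = cz r n κ c₀ c q * cz r n κ c₀ c p := by
  have hpq : p ≠ q := ne_of_gt hqp
  have h1 := starComm r n κ c₀ c hr hpq
  have h2 := cPhiYX r n κ c₀ c hr hqp
  have h3 : PhiD r n κ c₀ c p q * (𝕐 p * 𝕏 p) = (𝕐 q * 𝕏 q) * PhiD r n κ c₀ c p q :=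
    PhiYX_i r n κ c₀ c hr hpq
  have h4 : (𝕐 p * 𝕏 p) * cPhi r n κ c₀ c q = cPhi r n κ c₀ c q * (𝕐 p * 𝕏 p) :=
    (cPhiYX_zero r n κ c₀ c hr hqp).symm
  have h5 : cPhi r n κ c₀ c p * cPhi r n κ c₀ c q = cPhi r n κ c₀ c q * cPhi r n κ c₀ c p :=
    (cPhiCPhi r n κ c₀ c hr hqp).symm
  -- main cancellation
  have main : (𝕐 p * 𝕏 p) * (𝕐 q * 𝕏 q) + c₀ • (cPhi r n κ c₀ c p * (𝕐 q * 𝕏 q))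
      = ((𝕐 q * 𝕏 q) * (𝕐 p * 𝕏 p) + c₀ • ((𝕐 q * 𝕏 q) * cPhi r n κ c₀ c p)) := by
    have cancel : (𝕐 p * 𝕏 p) * (𝕐 q * 𝕏 q) + c₀ • (cPhi r n κ c₀ c p * (𝕐 q * 𝕏 q))
        + (c₀ • (PhiD r n κ c₀ c p q * (𝕐 q * 𝕏 q))
          + c₀ • ((𝕐 q * 𝕏 q) * PhiD r n κ c₀ c p q))
        = (𝕐 q * 𝕏 q) * (𝕐 p * 𝕏 p) + c₀ • ((𝕐 q * 𝕏 q) * cPhi r n κ c₀ c p)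
        + (c₀ • (PhiD r n κ c₀ c p q * (𝕐 q * 𝕏 q))
          + c₀ • ((𝕐 q * 𝕏 q) * PhiD r n κ c₀ c p q)) := by
      calc (𝕐 p * 𝕏 p) * (𝕐 q * 𝕏 q) + c₀ • (cPhi r n κ c₀ c p * (𝕐 q * 𝕏 q))
          + (c₀ • (PhiD r n κ c₀ c p q * (𝕐 q * 𝕏 q))
            + c₀ • ((𝕐 q * 𝕏 q) * PhiD r n κ c₀ c p q))
          = ((𝕐 p * 𝕏 p) * (𝕐 q * 𝕏 q) + c₀ • (PhiD r n κ c₀ c p q * (𝕐 q * 𝕏 q)))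
            + c₀ • (cPhi r n κ c₀ c p * (𝕐 q * 𝕏 q) + (𝕐 q * 𝕏 q) * PhiD r n κ c₀ c p q) := by
            rw [smul_add]
            abel
        _ = ((𝕐 q * 𝕏 q) * (𝕐 p * 𝕏 p) + c₀ • (PhiD r n κ c₀ c p q * (𝕐 p * 𝕏 p)))
            + c₀ • ((𝕐 q * 𝕏 q) * cPhi r n κ c₀ c p + PhiD r n κ c₀ c p q * (𝕐 q * 𝕏 q)) := by
            rw [h1, h2]
        _ = _ := by
            rw [h3, smul_add]
            abel
    exact add_right_cancel cancel
  simp only [cz, add_mul, mul_add, smul_mul_assoc, mul_smul_comm, smul_add]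
  rw [h4, h5, main]
  abel


lemma czComm (hr : 0 < r) (p q : Fin n) :
    cz r n κ c₀ c p * cz r n κ c₀ c q = cz r n κ c₀ c q * cz r n κ c₀ c p := by
  rcases lt_trichotomy p q with hlt | rfl | hgt
  · exact (czComm' r n κ c₀ c hr hlt).symm
  · rfl
  · exact czComm' r n κ c₀ c hr hgt

lemma sigma_helper {i i' : Fin n} {a b : RingQuot (CRel r n κ c₀ c)}
    (h1 : a * (cz r n κ c₀ c i - cz r n κ c₀ c i')
      = (cz r n κ c₀ c i - cz r n κ c₀ c i') * a)
    (h2 : a * 𝕋 (sW r i i') = 𝕋 (sW r i i') * b)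
    (h3 : a * cPi r n κ c₀ c i i' = cPi r n κ c₀ c i i' * b) :
    a * cSigma r n κ c₀ c i i' = cSigma r n κ c₀ c i i' * b := by
  simp only [cSigma]
  rw [mul_add, add_mul, mul_smul_comm, smul_mul_assoc, h3, ← mul_assoc, h1, mul_assoc, h2,
    ← mul_assoc]

/-- The intertwining relations of `σ̃_i` with the commutative
subalgebra: it exchanges `z_i, z_{i+1}` and `t_{ζ_i}, t_{ζ_{i+1}}` and commutes with the
other `z_j` and `t_{ζ_j}`. -/
theorem stmt12 (hr : 1 ≤ r) (hn : 2 ≤ n) (i i' : Fin n) (h : (i' : ℕ) = (i : ℕ) + 1) :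
    (cz r n κ c₀ c i * cSigma r n κ c₀ c i i' = cSigma r n κ c₀ c i i' * cz r n κ c₀ c i')
    ∧ (cz r n κ c₀ c i' * cSigma r n κ c₀ c i i' = cSigma r n κ c₀ c i i' * cz r n κ c₀ c i)
    ∧ (∀ j : Fin n, j ≠ i → j ≠ i' →
        cz r n κ c₀ c j * cSigma r n κ c₀ c i i' = cSigma r n κ c₀ c i i' * cz r n κ c₀ c j)
    ∧ (cT r n κ c₀ c (zetaW r i 1) * cSigma r n κ c₀ c i i' =
        cSigma r n κ c₀ c i i' * cT r n κ c₀ c (zetaW r i' 1))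
    ∧ (cT r n κ c₀ c (zetaW r i' 1) * cSigma r n κ c₀ c i i' =
        cSigma r n κ c₀ c i i' * cT r n κ c₀ c (zetaW r i 1))
    ∧ (∀ j : Fin n, j ≠ i → j ≠ i' →
        cT r n κ c₀ c (zetaW r j 1) * cSigma r n κ c₀ c i i' =
          cSigma r n κ c₀ c i i' * cT r n κ c₀ c (zetaW r j 1)) := by
  have hr0 : 0 < r := hr
  have hii' : i ≠ i' := ne_of_adj n h
  have hup' : cz r n κ c₀ c i * 𝕋 (sW r i i')
      = 𝕋 (sW r i i') * cz r n κ c₀ c i' - c₀ • cPi r n κ c₀ c i i' := by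
    rw [TsCz_up r n κ c₀ c hr0 h]
    abel
  have hdn' : cz r n κ c₀ c i' * 𝕋 (sW r i i')
      = 𝕋 (sW r i i') * cz r n κ c₀ c i + c₀ • cPi r n κ c₀ c i i' := by
    rw [TsCz_dn r n κ c₀ c hr0 h]
    abel
  have part1 : cz r n κ c₀ c i * cSigma r n κ c₀ c i i'
      = cSigma r n κ c₀ c i i' * cz r n κ c₀ c i' := by
    simp only [cSigma]
    calc cz r n κ c₀ c i * ((cz r n κ c₀ c i - cz r n κ c₀ c i') * 𝕋 (sW r i i')
          + c₀ • cPi r n κ c₀ c i i')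
        = cz r n κ c₀ c i * (cz r n κ c₀ c i - cz r n κ c₀ c i') * 𝕋 (sW r i i')
          + c₀ • (cz r n κ c₀ c i * cPi r n κ c₀ c i i') := by
          rw [mul_add, mul_smul_comm, ← mul_assoc]
      _ = (cz r n κ c₀ c i - cz r n κ c₀ c i') * (cz r n κ c₀ c i * 𝕋 (sW r i i'))
          + c₀ • (cz r n κ c₀ c i * cPi r n κ c₀ c i i') := by
          rw [mul_sub, sub_mul, czComm r n κ c₀ c hr0 i i', mul_assoc, sub_mul, mul_assoc]
      _ = (cz r n κ c₀ c i - cz r n κ c₀ c i')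
            * (𝕋 (sW r i i') * cz r n κ c₀ c i' - c₀ • cPi r n κ c₀ c i i')
          + c₀ • (cz r n κ c₀ c i * cPi r n κ c₀ c i i') := by rw [hup']
      _ = (cz r n κ c₀ c i - cz r n κ c₀ c i') * 𝕋 (sW r i i') * cz r n κ c₀ c i'
          - c₀ • ((cz r n κ c₀ c i - cz r n κ c₀ c i') * cPi r n κ c₀ c i i')
          + c₀ • (cz r n κ c₀ c i * cPi r n κ c₀ c i i') := by
          rw [mul_sub, mul_smul_comm, ← mul_assoc]
      _ = (cz r n κ c₀ c i - cz r n κ c₀ c i') * 𝕋 (sW r i i') * cz r n κ c₀ c i'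
          + c₀ • (cz r n κ c₀ c i' * cPi r n κ c₀ c i i') := by
          rw [sub_mul (cz r n κ c₀ c i) (cz r n κ c₀ c i') (cPi r n κ c₀ c i i'), smul_sub]
          abel
      _ = (cz r n κ c₀ c i - cz r n κ c₀ c i') * 𝕋 (sW r i i') * cz r n κ c₀ c i'
          + (c₀ • cPi r n κ c₀ c i i') * cz r n κ c₀ c i' := by
          rw [← cPiCz r n κ c₀ c hr0 i i' i', smul_mul_assoc]
      _ = _ := by rw [add_mul]
  have part2 : cz r n κ c₀ c i' * cSigma r n κ c₀ c i i'
      = cSigma r n κ c₀ c i i' * cz r n κ c₀ c i := by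
    simp only [cSigma]
    calc cz r n κ c₀ c i' * ((cz r n κ c₀ c i - cz r n κ c₀ c i') * 𝕋 (sW r i i')
          + c₀ • cPi r n κ c₀ c i i')
        = cz r n κ c₀ c i' * (cz r n κ c₀ c i - cz r n κ c₀ c i') * 𝕋 (sW r i i')
          + c₀ • (cz r n κ c₀ c i' * cPi r n κ c₀ c i i') := by
          rw [mul_add, mul_smul_comm, ← mul_assoc]
      _ = (cz r n κ c₀ c i - cz r n κ c₀ c i') * (cz r n κ c₀ c i' * 𝕋 (sW r i i'))
          + c₀ • (cz r n κ c₀ c i' * cPi r n κ c₀ c i i') := by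
          rw [mul_sub, sub_mul, czComm r n κ c₀ c hr0 i' i, mul_assoc, sub_mul, mul_assoc]
      _ = (cz r n κ c₀ c i - cz r n κ c₀ c i')
            * (𝕋 (sW r i i') * cz r n κ c₀ c i + c₀ • cPi r n κ c₀ c i i')
          + c₀ • (cz r n κ c₀ c i' * cPi r n κ c₀ c i i') := by rw [hdn']
      _ = (cz r n κ c₀ c i - cz r n κ c₀ c i') * 𝕋 (sW r i i') * cz r n κ c₀ c i
          + c₀ • ((cz r n κ c₀ c i - cz r n κ c₀ c i') * cPi r n κ c₀ c i i')
          + c₀ • (cz r n κ c₀ c i' * cPi r n κ c₀ c i i') := by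
          rw [mul_add, mul_smul_comm, ← mul_assoc]
      _ = (cz r n κ c₀ c i - cz r n κ c₀ c i') * 𝕋 (sW r i i') * cz r n κ c₀ c i
          + c₀ • (cz r n κ c₀ c i * cPi r n κ c₀ c i i') := by
          rw [sub_mul (cz r n κ c₀ c i) (cz r n κ c₀ c i') (cPi r n κ c₀ c i i'), smul_sub]
          abel
      _ = (cz r n κ c₀ c i - cz r n κ c₀ c i') * 𝕋 (sW r i i') * cz r n κ c₀ c i
          + (c₀ • cPi r n κ c₀ c i i') * cz r n κ c₀ c i := by
          rw [← cPiCz r n κ c₀ c hr0 i i' i, smul_mul_assoc]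
      _ = _ := by rw [add_mul]
  refine ⟨part1, part2, ?_, ?_, ?_, ?_⟩
  · intro j hji hji'
    refine sigma_helper r n κ c₀ c ?_ ?_ ?_
    · rw [mul_sub, sub_mul, czComm r n κ c₀ c hr0 j i, czComm r n κ c₀ c hr0 j i']
    · exact (TsCz_other r n κ c₀ c hr0 h hji hji').symm
    · exact cPiCz r n κ c₀ c hr0 i i' j ▸ (cPiCz r n κ c₀ c hr0 i i' j).symm
  · refine sigma_helper r n κ c₀ c ?_ ?_ ?_
    · rw [mul_sub, sub_mul, TzCz r n κ c₀ c hr0 i i 1, TzCz r n κ c₀ c hr0 i i' 1]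
    · exact (TsTzR r n κ c₀ c i i' 1).symm
    · exact TzPiI r n κ c₀ c hr0 i i' 1
  · refine sigma_helper r n κ c₀ c ?_ ?_ ?_
    · rw [mul_sub, sub_mul, TzCz r n κ c₀ c hr0 i' i 1, TzCz r n κ c₀ c hr0 i' i' 1]
    · exact (TsTzL r n κ c₀ c i i' 1).symm
    · exact TzPiJ r n κ c₀ c hr0 i i' 1
  · intro j hji hji'
    refine sigma_helper r n κ c₀ c ?_ ?_ ?_
    · rw [mul_sub, sub_mul, TzCz r n κ c₀ c hr0 j i 1, TzCz r n κ c₀ c hr0 j i' 1]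
    · exact (TsTzO r n κ c₀ c i i' j 1 hji hji').symm
    · exact TzPiO r n κ c₀ c j i i' hji hji' 1
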